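/- arXiv:1702.03622 — 3 statements merged into one kernel-verified Lean document; each statement's English description precedes it below -/
import Mathlib

section
/- Let Γ and G be groups and let ρ : Γ → G be a homomorphism whose orbit under the precomposition action of Aut(Γ) on Hom(Γ, G) is finite. Then there is a finite index subgroup Γ₁ ≤ Γ such that ρ(Γ₁) is contained in the center of ρ(Γ). In particular, ρ(Γ) is a central extension of a finite group. -/
theorem stmt1 {Γ G : Type*} [Group Γ] [Group G] (ρ : Γ →* G)
    (hfin : (Set.range fun φ : MulAut Γ => ρ.comp φ.toMonoidHom).Finite) :
    ∃ Γ₁ : Subgroup Γ, Γ₁.FiniteIndex ∧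
      (∀ x ∈ Γ₁, ∀ γ : Γ, ρ x * ρ γ = ρ γ * ρ x) ∧
      ∃ Z : Subgroup ρ.range, (∀ z ∈ Z, ∀ w : ρ.range, z * w = w * z) ∧ Z.FiniteIndex := by
  classical
  set Γ₁ : Subgroup Γ := Subgroup.comap ρ (Subgroup.centralizer (Set.range ρ)) with hΓ₁def
  have hmem : ∀ γ : Γ, γ ∈ Γ₁ ↔ ∀ x : Γ, ρ x * ρ γ = ρ γ * ρ x := by
    intro γ
    constructor
    · intro h x
      exact h (ρ x) ⟨x, rfl⟩
    · rintro h g ⟨x, rfl⟩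
      exact h x
  set g : Γ → (Γ →* G) := fun γ => ρ.comp (MulAut.conj γ).toMonoidHom with hgdef
  have hgmem : ∀ γ, g γ ∈ Set.range fun φ : MulAut Γ => ρ.comp φ.toMonoidHom :=
    fun γ => ⟨MulAut.conj γ, rfl⟩
  have key1 : ∀ a b : Γ, g a = g b → a⁻¹ * b ∈ Γ₁ := by
    intro a b h
    rw [hmem]
    have hv : ∀ y : Γ, ρ b * (ρ a)⁻¹ * ρ y = ρ y * (ρ b * (ρ a)⁻¹) := by
      intro y
      have h1 := DFunLike.congr_fun h (a⁻¹ * y * a)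
      simp only [hgdef, MonoidHom.comp_apply, MulEquiv.coe_toMonoidHom, MulAut.conj_apply] at h1
      rw [show a * (a⁻¹ * y * a) * a⁻¹ = y by group] at h1
      simp only [map_mul, map_inv] at h1
      have h2 : ρ y * (ρ b * (ρ a)⁻¹) = ρ b * (ρ a)⁻¹ * ρ y := by
        conv_lhs => rw [h1]
        group
      exact h2.symm
    have h4 : (ρ a)⁻¹ * ρ b = ρ b * (ρ a)⁻¹ := by
      have h3 := hv a
      calc (ρ a)⁻¹ * ρ b = (ρ a)⁻¹ * (ρ b * (ρ a)⁻¹ * ρ a) := by group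
        _ = (ρ a)⁻¹ * (ρ a * (ρ b * (ρ a)⁻¹)) := by rw [h3]
        _ = ρ b * (ρ a)⁻¹ := by group
    intro x
    simp only [map_mul, map_inv]
    calc ρ x * ((ρ a)⁻¹ * ρ b) = ρ x * (ρ b * (ρ a)⁻¹) := by rw [h4]
      _ = ρ b * (ρ a)⁻¹ * ρ x := (hv x).symm
      _ = (ρ a)⁻¹ * ρ b * ρ x := by rw [← h4]
  have key2 : ∀ a b : Γ, a⁻¹ * b ∈ Γ₁ → g a = g b := by
    intro a b h
    rw [hmem] at h
    ext x
    simp only [hgdef, MonoidHom.comp_apply, MulEquiv.coe_toMonoidHom, MulAut.conj_apply]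
    simp only [map_mul, map_inv]
    have h' := h x
    simp only [map_mul, map_inv] at h'
    -- h' : ρ x * ((ρ a)⁻¹ * ρ b) = (ρ a)⁻¹ * ρ b * ρ x
    have hc : ((ρ a)⁻¹ * ρ b) * ρ x * ((ρ a)⁻¹ * ρ b)⁻¹ = ρ x := by
      rw [← h', mul_inv_cancel_right]
    calc ρ a * ρ x * (ρ a)⁻¹
        = ρ a * (((ρ a)⁻¹ * ρ b) * ρ x * ((ρ a)⁻¹ * ρ b)⁻¹) * (ρ a)⁻¹ := by rw [hc]
      _ = ρ b * ρ x * (ρ b)⁻¹ := by group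
  have hQfin : Finite (Γ ⧸ Γ₁) := by
    have hS : Finite (Set.range fun φ : MulAut Γ => ρ.comp φ.toMonoidHom) := hfin.to_subtype
    let F : Γ ⧸ Γ₁ → (Set.range fun φ : MulAut Γ => ρ.comp φ.toMonoidHom) :=
      Quotient.lift
        (fun γ => (⟨g γ, hgmem γ⟩ : (Set.range fun φ : MulAut Γ => ρ.comp φ.toMonoidHom)))
        (fun a b hab => Subtype.ext (key2 a b (QuotientGroup.leftRel_apply.mp hab)))
    have hFinj : Function.Injective F := by
      intro q1 q2
      induction q1 using Quotient.inductionOn with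
      | h a =>
        induction q2 using Quotient.inductionOn with
        | h b =>
          intro h
          exact Quotient.sound (QuotientGroup.leftRel_apply.mpr
            (key1 a b (Subtype.ext_iff.mp h)))
    exact Finite.of_injective F hFinj
  have hΓ₁fin : Γ₁.FiniteIndex := Γ₁.finiteIndex_of_finite_quotient
  refine ⟨Γ₁, hΓ₁fin, fun x hx γ => ((hmem x).mp hx γ).symm, Γ₁.map ρ.rangeRestrict, ?_, ?_⟩
  · rintro z ⟨x, hx, rfl⟩ w
    apply Subtype.ext
    obtain ⟨γ, hγ⟩ := w.2
    show ρ x * (w : G) = (w : G) * ρ x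
    rw [← hγ]
    exact ((hmem x).mp hx γ).symm
  · have hdvd : (Γ₁.map ρ.rangeRestrict).index ∣ Γ₁.index :=
      Subgroup.index_map_dvd Γ₁ ρ.rangeRestrict_surjective
    exact ⟨fun hz => hΓ₁fin.index_ne_zero (Nat.eq_zero_of_zero_dvd (hz ▸ hdvd))⟩
end

section
/- Let n ≥ 2, let M = ℤⁿ with the natural GL_n(ℤ)-action, and let H ≤ GL_n(ℤ) be a finite index subgroup. Then the module of H-co-invariants M / ⟨φ(v) − v : v ∈ M, φ ∈ H⟩ is a finite group. -/
open Matrix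

lemma transvection_pow' {n : ℕ} {i j : Fin n} (h : i ≠ j) (c : ℤ) (N : ℕ) :
    (Matrix.transvection i j c) ^ N = Matrix.transvection i j (N * c) := by
  induction N with
  | zero => simp
  | succ k ih =>
    rw [pow_succ, ih, Matrix.transvection_mul_transvection_same i j h]
    push_cast; ring_nf

lemma transvection_mulVec_single {n : ℕ} {i j : Fin n} (hij : i ≠ j) (N : ℤ) :
    (Matrix.transvection i j N).mulVec (Pi.single j 1) - Pi.single j 1
      = (Pi.single i N : Fin n → ℤ) := by
  funext x
  simp only [Matrix.transvection, Matrix.add_mulVec, Matrix.single_mulVec,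
    Matrix.one_mulVec, Pi.sub_apply, Pi.add_apply, Function.update_apply,
    Pi.single_apply, Pi.zero_apply]
  split_ifs <;> simp_all

lemma single_mem_closure {n : ℕ} (hn : 2 ≤ n) (H : Subgroup (GL (Fin n) ℤ))
    (hH : H.FiniteIndex) (i : Fin n) :
    ∃ N : ℕ, 0 < N ∧ (Pi.single i (N : ℤ) : Fin n → ℤ) ∈
      AddSubgroup.closure {x : Fin n → ℤ | ∃ φ ∈ H, ∃ v : Fin n → ℤ,
        x = ((φ : Matrix (Fin n) (Fin n) ℤ)).mulVec v - v} := by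
  have : Nontrivial (Fin n) := Fin.nontrivial_iff_two_le.mpr hn
  obtain ⟨j, hj⟩ := exists_ne i
  have hij : i ≠ j := hj.symm
  set u : GL (Fin n) ℤ := ⟨Matrix.transvection i j 1, Matrix.transvection i j (-1),
    by rw [Matrix.transvection_mul_transvection_same i j hij]; norm_num,
    by rw [Matrix.transvection_mul_transvection_same i j hij]; norm_num⟩ with hu
  obtain ⟨N, hN0, _, hNH⟩ := Subgroup.exists_pow_mem_of_index_ne_zero hH.index_ne_zero u
  refine ⟨N, hN0, ?_⟩
  apply AddSubgroup.subset_closure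
  refine ⟨u ^ N, hNH, Pi.single j 1, ?_⟩
  have hval : ((u ^ N : GL (Fin n) ℤ) : Matrix (Fin n) (Fin n) ℤ)
      = Matrix.transvection i j (N : ℤ) := by
    rw [Units.val_pow_eq_pow_val, hu, transvection_pow' hij, mul_one]
  rw [hval, transvection_mulVec_single hij]

theorem stmt5 {n : ℕ} (hn : 2 ≤ n) (H : Subgroup (GL (Fin n) ℤ)) (hH : H.FiniteIndex) :
    Finite ((Fin n → ℤ) ⧸ AddSubgroup.closure {x : Fin n → ℤ | ∃ φ ∈ H, ∃ v : Fin n → ℤ,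
      x = ((φ : Matrix (Fin n) (Fin n) ℤ)).mulVec v - v}) := by
  set L := AddSubgroup.closure {x : Fin n → ℤ | ∃ φ ∈ H, ∃ v : Fin n → ℤ,
      x = ((φ : Matrix (Fin n) (Fin n) ℤ)).mulVec v - v} with hL
  choose Nf hNf0 hNfmem using single_mem_closure hn H hH
  set N : ℕ := ∏ i, Nf i with hNdef
  have hN0 : 0 < N := Finset.prod_pos (fun i _ => hNf0 i)
  have hsingle : ∀ (i : Fin n) (k : ℤ), Pi.single i (k * (Nf i : ℤ)) ∈ L := by
    intro i k
    have := AddSubgroup.zsmul_mem L (hNfmem i) k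
    rwa [← Pi.single_smul, smul_eq_mul] at this
  have key : ∀ v : Fin n → ℤ, (N : ℤ) • v ∈ L := by
    intro v
    have hdvd : ∀ i : Fin n, (Nf i : ℤ) ∣ (N : ℤ) := fun i =>
      Int.natCast_dvd_natCast.mpr (Finset.dvd_prod_of_mem Nf (Finset.mem_univ i))
    have hrep : (N : ℤ) • v = ∑ i, Pi.single i ((N : ℤ) * v i) := by
      funext x
      simp [Finset.sum_apply, Pi.single_apply, mul_comm]
    rw [hrep]
    apply AddSubgroup.sum_mem
    intro i _
    obtain ⟨k, hk⟩ := hdvd i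
    have : (N : ℤ) * v i = (v i * k) * (Nf i : ℤ) := by rw [hk]; ring
    rw [this]
    exact hsingle i _
  have htor : AddMonoid.IsTorsion ((Fin n → ℤ) ⧸ L) := by
    intro x
    induction x using QuotientAddGroup.induction_on with
    | H v =>
      rw [isOfFinAddOrder_iff_nsmul_eq_zero]
      refine ⟨N, hN0, ?_⟩
      rw [← QuotientAddGroup.mk_nsmul, QuotientAddGroup.eq_zero_iff]
      have : (N : ℤ) • v = N • v := by simp
      rw [← this]
      exact key v
  have hfg : AddGroup.FG (Fin n → ℤ) := by
    rw [← Module.Finite.iff_addGroup_fg]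
    infer_instance
  exact AddCommGroup.finite_of_fg_torsion _ htor
end

section
/- Let Γ be a group and G a group, and suppose ρ : Γ → G is a homomorphism that is invariant under every automorphism of Γ. If the module of co-invariants of the Out(Γ)-action on H₁(Γ, ℤ) = Γ/[Γ,Γ] is trivial, then ρ(Γ) is trivial. If this module of co-invariants is finite, then ρ(Γ) is finite. -/
theorem stmt7 {Γ G : Type*} [Group Γ] [Group G] (ρ : Γ →* G)
    (hinv : ∀ φ : MulAut Γ, ρ.comp φ.toMonoidHom = ρ) :
    (Subgroup.closure {x : Abelianization Γ | ∃ (φ : MulAut Γ) (v : Abelianization Γ),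
        x = Abelianization.map φ.toMonoidHom v * v⁻¹} = ⊤ → ∀ γ : Γ, ρ γ = 1) ∧
    (Finite (Abelianization Γ ⧸ Subgroup.closure
        {x : Abelianization Γ | ∃ (φ : MulAut Γ) (v : Abelianization Γ),
          x = Abelianization.map φ.toMonoidHom v * v⁻¹}) → (Set.range ρ).Finite) := by
  -- ρ is invariant under conjugation, so it kills commutators
  have hconj : ∀ x y : Γ, ρ (x * y * x⁻¹) = ρ y := by
    intro x y
    have := congrArg (fun f => f y) (hinv (MulAut.conj x))
    simpa using this
  have hker : commutator Γ ≤ ρ.ker := by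
    rw [commutator_def, Subgroup.commutator_le]
    intro x _ y _
    simp [MonoidHom.mem_ker, commutatorElement_def, ← mul_assoc,
      mul_assoc (ρ x), hconj x y]
  -- lift ρ to the abelianization
  let ρ' : Abelianization Γ →* G := QuotientGroup.lift (commutator Γ) ρ hker
  have hρ' : ∀ g : Γ, ρ' (Abelianization.of g) = ρ g := fun g => rfl
  set N := Subgroup.closure {x : Abelianization Γ | ∃ (φ : MulAut Γ) (v : Abelianization Γ),
        x = Abelianization.map φ.toMonoidHom v * v⁻¹} with hN
  have hmap : ∀ (φ : MulAut Γ) (v : Abelianization Γ),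
      ρ' (Abelianization.map φ.toMonoidHom v) = ρ' v := by
    intro φ v
    refine QuotientGroup.induction_on v fun g => ?_
    have := congrArg (fun f => f g) (hinv φ)
    show ρ' (Abelianization.map φ.toMonoidHom (Abelianization.of g)) = ρ' (Abelianization.of g)
    simpa [Abelianization.map_of, hρ'] using this
  have hNker : N ≤ ρ'.ker := by
    rw [hN, Subgroup.closure_le]
    rintro x ⟨φ, v, rfl⟩
    rw [SetLike.mem_coe, MonoidHom.mem_ker, map_mul, map_inv, hmap φ v, mul_inv_cancel]
  constructor
  · intro htop γ
    have : Abelianization.of γ ∈ ρ'.ker := hNker (htop ▸ Subgroup.mem_top _)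
    simpa [MonoidHom.mem_ker, hρ'] using this
  · intro hfin
    let ρ'' : (Abelianization Γ ⧸ N) →* G := QuotientGroup.lift N ρ' hNker
    have hsub : Set.range ρ ⊆ Set.range ρ'' := by
      rintro _ ⟨γ, rfl⟩
      exact ⟨QuotientGroup.mk (Abelianization.of γ), rfl⟩
    exact (Set.finite_range ρ'').subset hsub
end
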